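/- Φ_𝒩 is β-strongly smooth with respect to the ℓ∞ norm with β = √(8/π)·A·X; concretely, for all Θ, Θ′ ∈ ℝ^ℬ, ‖E_{ℓ∼γ}[H(Θ, ℓ)] − E_{ℓ∼γ}[H(Θ′, ℓ)]‖₁ ≤ √(8/π)·A·X·‖Θ − Θ′‖_∞. -/

import Mathlib

/-!
If the perturbed argmaxes for `Θ` and `Θ'` differ at `ℓ`, they disagree at some state `x`; with
`p = (x, a)` for `a` the action of the `Θ`-argmax, a policy through `p` wins for `Θ` while a
policy avoiding `p` wins for `Θ'`. With the other coordinates of `ℓ` fixed, this pins `ℓ p`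
between two thresholds, one for `Θ` and one for `Θ'`, that differ by at most `2‖Θ - Θ'‖∞`; so it
has standard Gaussian probability at most `2‖Θ - Θ'‖∞ / √(2π)`. The `ℓ¹` distance of the two argmax laws is
at most twice the probability that the argmaxes differ, and a union bound over the `X·A`
coordinates gives the constant `4 / √(2π) = √(8/π)`.
-/

open MeasureTheory ProbabilityTheory Finset
open scoped NNReal ENNReal

noncomputable def gaussianPerturbation (X A : Type*) [Fintype X] [Fintype A] :
    Measure ((X × A) → ℝ) :=
  Measure.pi fun _ : X × A => gaussianReal 0 1

instance isProbabilityMeasure_gaussianPerturbation (X A : Type*) [Fintype X] [Fintype A] :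
    IsProbabilityMeasure (gaussianPerturbation X A) := by
  unfold gaussianPerturbation
  infer_instance

lemma gaussianPDFReal_le_inv_sqrt (μ : ℝ) (v : ℝ≥0) (x : ℝ) :
    gaussianPDFReal μ v x ≤ (√(2 * Real.pi * v))⁻¹ := by
  rw [gaussianPDFReal_def]
  refine mul_le_of_le_one_right (by positivity) (Real.exp_le_one_iff.2 ?_)
  exact div_nonpos_of_nonpos_of_nonneg (neg_nonpos.2 (sq_nonneg _)) (by positivity)

lemma gaussianReal_Icc_le (μ : ℝ) {v : ℝ≥0} (hv : v ≠ 0) (a b : ℝ) :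
    gaussianReal μ v (Set.Icc a b) ≤ ENNReal.ofReal ((b - a) / √(2 * Real.pi * v)) := by
  rw [gaussianReal_apply μ hv, div_eq_inv_mul,
    ENNReal.ofReal_mul (by positivity), ← Real.volume_Icc, ← setLIntegral_const]
  exact lintegral_mono fun x => ENNReal.ofReal_le_ofReal (gaussianPDFReal_le_inv_sqrt μ v x)

lemma Measure.pi_le_of_forall_preimage_update_le {ι : Type*} [Fintype ι] [DecidableEq ι]
    {π : ι → Type*} [∀ i, MeasurableSpace (π i)] {μ : ∀ i, Measure (π i)}
    [∀ i, IsProbabilityMeasure (μ i)] {E : Set (∀ i, π i)} (hE : MeasurableSet E) (i : ι)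
    {C : ℝ≥0∞} (hC : ∀ x, μ i (Function.update x i ⁻¹' E) ≤ C) :
    Measure.pi μ E ≤ C := by
  let x₀ : ∀ j, π j := fun j => (nonempty_of_isProbabilityMeasure (μ j)).some
  rw [← lintegral_indicator_one hE, lintegral_eq_lmarginal_univ x₀,
    lmarginal_erase' (μ := μ) _ (measurable_one.indicator hE) (mem_univ i)]
  calc (∫⋯∫⁻_univ.erase i, fun x ↦ ∫⁻ t, E.indicator 1 (Function.update x i t) ∂μ i ∂μ) x₀
      ≤ (∫⋯∫⁻_univ.erase i, fun _ ↦ C ∂μ) x₀ := lmarginal_mono (fun x => ?_) x₀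
    _ = C := by simp [lmarginal]
  simp_rw [← Set.indicator_comp_right (Function.update x i), Pi.one_comp]
  rw [lintegral_indicator_one (measurable_update x hE)]
  exact hC x

lemma sum_abs_ite_eq_sub_ite_eq {β : Type*} [Fintype β] [DecidableEq β] (a a' : β) :
    ∑ b, |(if a = b then (1 : ℝ) else 0) - (if a' = b then 1 else 0)| =
      if a = a' then 0 else 2 := by
  by_cases h : a = a'
  · simp [h]
  have hterm : ∀ b, |(if a = b then (1 : ℝ) else 0) - (if a' = b then 1 else 0)| =
      (if a = b then 1 else 0) + (if a' = b then 1 else 0) := by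
    intro b
    by_cases ha : a = b <;> by_cases ha' : a' = b <;> simp_all
  simp only [hterm, sum_add_distrib, sum_ite_eq, mem_univ, if_true, h, if_false]
  norm_num

lemma sum_abs_integral_ite_sub_le_two_mul_measureReal {Ω β : Type*} [MeasurableSpace Ω]
    {μ : Measure Ω} [IsFiniteMeasure μ] [Fintype β] [DecidableEq β] {s s' : Ω → β}
    (hs : ∀ b, Measurable fun ω => if s ω = b then (1 : ℝ) else 0)
    (hs' : ∀ b, Measurable fun ω => if s' ω = b then (1 : ℝ) else 0)
    {E : Set Ω} (hE : MeasurableSet E) (hsE : ∀ᵐ ω ∂μ, s ω ≠ s' ω → ω ∈ E) :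
    ∑ b, |(∫ ω, (if s ω = b then (1 : ℝ) else 0) ∂μ) -
        ∫ ω, (if s' ω = b then (1 : ℝ) else 0) ∂μ| ≤ 2 * μ.real E := by
  have hint : ∀ (t : Ω → β), (∀ b, Measurable fun ω => if t ω = b then (1 : ℝ) else 0) →
      ∀ b, Integrable (fun ω => if t ω = b then (1 : ℝ) else 0) μ := fun t ht b =>
    .of_bound (ht b).aestronglyMeasurable 1 (.of_forall fun ω => by split_ifs <;> simp)
  calc ∑ b, |(∫ ω, (if s ω = b then (1 : ℝ) else 0) ∂μ) -
        ∫ ω, (if s' ω = b then (1 : ℝ) else 0) ∂μ|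
      ≤ ∑ b, ∫ ω, |(if s ω = b then (1 : ℝ) else 0) - (if s' ω = b then 1 else 0)| ∂μ := by
        refine sum_le_sum fun b _ => ?_
        rw [← integral_sub (hint s hs b) (hint s' hs' b)]
        exact abs_integral_le_integral_abs
    _ = ∫ ω, ∑ b, |(if s ω = b then (1 : ℝ) else 0) - (if s' ω = b then 1 else 0)| ∂μ :=
        (integral_finsetSum _ fun b _ => ((hint s hs b).sub (hint s' hs' b)).abs).symm
    _ ≤ ∫ ω, 2 * E.indicator 1 ω ∂μ := by
        refine integral_mono_ae (integrable_finsetSum _ fun b _ =>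
          ((hint s hs b).sub (hint s' hs' b)).abs)
          ((integrable_const 1).indicator hE |>.const_mul 2) ?_
        filter_upwards [hsE] with ω hω
        rw [sum_abs_ite_eq_sub_ite_eq]
        by_cases h : s ω = s' ω
        · simp [h, Set.indicator_nonneg]
        · simp [h, Set.indicator_of_mem (hω h)]
    _ = 2 * μ.real E := by rw [integral_const_mul, integral_indicator_one hE]

lemma ciSup_le_ciSup_add {ι : Type*} [Finite ι] {f g : ι → ℝ} {ε : ℝ} (hε : 0 ≤ ε)
    (h : ∀ i, f i ≤ g i + ε) : ⨆ i, f i ≤ (⨆ i, g i) + ε := by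
  cases isEmpty_or_nonempty ι
  · simpa using hε
  exact ciSup_le fun i => (h i).trans (by gcongr; exact le_ciSup (Finite.bddAbove_range g) i)

namespace PerturbedArgmax

variable {X A B : Type*} [Fintype X] (pol : B → X → A)

def score (θ : B → ℝ) (ℓ : X × A → ℝ) (h : B) : ℝ := θ h + ∑ x, ℓ (x, pol h x)

variable [DecidableEq X]

def scoreExcept (x₀ : X) (θ : B → ℝ) (ℓ : X × A → ℝ) (h : B) : ℝ :=
  θ h + ∑ x ∈ univ.erase x₀, ℓ (x, pol h x)

lemma score_eq_add_scoreExcept (x₀ : X) (θ : B → ℝ) (ℓ : X × A → ℝ) (h : B) :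
    score pol θ ℓ h = ℓ (x₀, pol h x₀) + scoreExcept pol x₀ θ ℓ h := by
  rw [score, scoreExcept, ← add_sum_erase _ _ (mem_univ x₀)]
  ring

/-- The value of `ℓ p` above which the best policy through `p` beats every policy avoiding `p`. -/
noncomputable def switchThreshold (θ : B → ℝ) (p : X × A) (ℓ : X × A → ℝ) : ℝ :=
  (⨆ h : {h // pol h p.1 ≠ p.2}, score pol θ ℓ h) -
    ⨆ h : {h // pol h p.1 = p.2}, scoreExcept pol p.1 θ ℓ h

def switchStrip (θ θ' : B → ℝ) (p : X × A) : Set (X × A → ℝ) :=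
  {ℓ | switchThreshold pol θ p ℓ ≤ ℓ p ∧ ℓ p ≤ switchThreshold pol θ' p ℓ}

lemma switchThreshold_update [DecidableEq A] (θ : B → ℝ) (p : X × A) (ℓ : X × A → ℝ) (t : ℝ) :
    switchThreshold pol θ p (Function.update ℓ p t) = switchThreshold pol θ p ℓ := by
  obtain ⟨x₀, a⟩ := p
  have hscore : ∀ h : {h // pol h x₀ ≠ a},
      score pol θ (Function.update ℓ (x₀, a) t) h = score pol θ ℓ h := by
    rintro ⟨h, hp⟩
    refine congrArg (θ h + ·) (sum_congr rfl fun x _ => Function.update_of_ne ?_ _ _)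
    intro he
    obtain ⟨rfl, he⟩ := Prod.mk.inj he
    exact hp he
  have hexcept : ∀ h : {h // pol h x₀ = a},
      scoreExcept pol x₀ θ (Function.update ℓ (x₀, a) t) h = scoreExcept pol x₀ θ ℓ h := by
    intro h
    refine congrArg (θ h + ·) (sum_congr rfl fun x hx => Function.update_of_ne ?_ _ _)
    exact fun he => (mem_erase.1 hx).1 (Prod.mk.inj he).1
  simp only [switchThreshold, hscore, hexcept]

variable [Finite B]

lemma measurable_switchThreshold (θ : B → ℝ) (p : X × A) :
    Measurable (switchThreshold pol θ p) := by
  unfold switchThreshold score scoreExcept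
  refine .sub (.iSup fun h => ?_) (.iSup fun h => ?_) <;> fun_prop

lemma measurableSet_switchStrip (θ θ' : B → ℝ) (p : X × A) :
    MeasurableSet (switchStrip pol θ θ' p) :=
  (measurableSet_le (measurable_switchThreshold pol θ p) (measurable_pi_apply p)).inter
    (measurableSet_le (measurable_pi_apply p) (measurable_switchThreshold pol θ' p))

lemma switchThreshold_sub_le {θ θ' : B → ℝ} {ε : ℝ} (hε : 0 ≤ ε) (hθ : ∀ h, |θ h - θ' h| ≤ ε)
    (p : X × A) (ℓ : X × A → ℝ) :
    switchThreshold pol θ' p ℓ - switchThreshold pol θ p ℓ ≤ 2 * ε := by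
  have hT := ciSup_le_ciSup_add hε fun h : {h // pol h p.1 ≠ p.2} =>
    show score pol θ' ℓ h ≤ score pol θ ℓ h + ε by
      simp only [score]; linarith [(abs_le.1 (hθ h)).1]
  have hS := ciSup_le_ciSup_add hε fun h : {h // pol h p.1 = p.2} =>
    show scoreExcept pol p.1 θ ℓ h ≤ scoreExcept pol p.1 θ' ℓ h + ε by
      simp only [scoreExcept]; linarith [(abs_le.1 (hθ h)).2]
  simp only [switchThreshold]
  linarith

lemma mem_switchStrip {θ θ' : B → ℝ} {ℓ : X × A → ℝ} {h₀ h₁ : B}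
    (hmax : ∀ h, score pol θ ℓ h ≤ score pol θ ℓ h₀)
    (hmax' : ∀ h, score pol θ' ℓ h ≤ score pol θ' ℓ h₁) {x : X} (hx : pol h₀ x ≠ pol h₁ x) :
    ℓ ∈ switchStrip pol θ θ' (x, pol h₀ x) := by
  have : Nonempty {h // pol h x ≠ pol h₀ x} := ⟨⟨h₁, hx.symm⟩⟩
  have : Nonempty {h // pol h x = pol h₀ x} := ⟨⟨h₀, rfl⟩⟩
  have hthrough : ∀ h : {h // pol h x = pol h₀ x},
      score pol θ' ℓ h = ℓ (x, pol h₀ x) + scoreExcept pol x θ' ℓ h := fun ⟨h, hh⟩ => by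
    rw [score_eq_add_scoreExcept pol x, hh]
  constructor
  · rw [switchThreshold, sub_le_iff_le_add]
    refine ciSup_le fun h => (hmax h).trans ?_
    rw [score_eq_add_scoreExcept pol x]
    exact (add_le_add_iff_left _).2 <| le_ciSup
      (f := fun h : {h // pol h x = pol h₀ x} => scoreExcept pol x θ ℓ h)
      (Finite.bddAbove_range _) ⟨h₀, rfl⟩
  · rw [switchThreshold, le_sub_iff_add_le', ← le_sub_iff_add_le]
    refine ciSup_le fun h => ?_
    rw [le_sub_iff_add_le', ← hthrough]
    exact (hmax' h).trans <| le_ciSup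
      (f := fun h : {h // pol h x ≠ pol h₀ x} => score pol θ' ℓ h)
      (Finite.bddAbove_range _) ⟨h₁, hx.symm⟩

lemma measureReal_switchStrip_le [Fintype A] [DecidableEq A] {θ θ' : B → ℝ} {ε : ℝ}
    (hε : 0 ≤ ε) (hθ : ∀ h, |θ h - θ' h| ≤ ε) (p : X × A) :
    (gaussianPerturbation X A).real (switchStrip pol θ θ' p) ≤ 2 * ε / √(2 * Real.pi) := by
  refine ENNReal.toReal_le_of_le_ofReal (by positivity) ?_
  refine Measure.pi_le_of_forall_preimage_update_le (measurableSet_switchStrip pol θ θ' p) p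
    fun ℓ => ?_
  have hsection : Function.update ℓ p ⁻¹' switchStrip pol θ θ' p =
      Set.Icc (switchThreshold pol θ p ℓ) (switchThreshold pol θ' p ℓ) := by
    ext t
    simp [switchStrip, switchThreshold_update]
  rw [hsection]
  refine (gaussianReal_Icc_le 0 one_ne_zero _ _).trans (ENNReal.ofReal_le_ofReal ?_)
  rw [NNReal.coe_one, mul_one]
  gcongr
  exact switchThreshold_sub_le pol hε hθ p ℓ

end PerturbedArgmax

open PerturbedArgmax

theorem PhiN_gradient_strongly_smooth_general {X A B : Type*}
    [Fintype X] [Fintype A] [Fintype B]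
    [DecidableEq B]
    (pol : B → X → A)
    (hsep : ∀ h h' : B, h ≠ h' → ∃ x : X, pol h x ≠ pol h' x)
    (Θ Θ' : B → ℝ)
    (sel sel' : ((X × A) → ℝ) → B)
    (hmeas : ∀ h : B,
      Measurable fun ℓ : (X × A) → ℝ => (if sel ℓ = h then (1:ℝ) else 0))
    (hmeas' : ∀ h : B,
      Measurable fun ℓ : (X × A) → ℝ => (if sel' ℓ = h then (1:ℝ) else 0))
    (hsel : ∀ᵐ ℓ : (X × A) → ℝ ∂(gaussianPerturbation X A), ∀ h' : B,
      Θ h' + ∑ x : X, ℓ (x, pol h' x)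
        ≤ Θ (sel ℓ) + ∑ x : X, ℓ (x, pol (sel ℓ) x))
    (hsel' : ∀ᵐ ℓ : (X × A) → ℝ ∂(gaussianPerturbation X A), ∀ h' : B,
      Θ' h' + ∑ x : X, ℓ (x, pol h' x)
        ≤ Θ' (sel' ℓ) + ∑ x : X, ℓ (x, pol (sel' ℓ) x)) :
    ∑ h : B,
      |(∫ ℓ : (X × A) → ℝ, (if sel ℓ = h then (1:ℝ) else 0)
          ∂(gaussianPerturbation X A))
        - (∫ ℓ : (X × A) → ℝ, (if sel' ℓ = h then (1:ℝ) else 0)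
            ∂(gaussianPerturbation X A))|
      ≤ Real.sqrt (8 / Real.pi) * (Fintype.card A) * (Fintype.card X) *
          (⨆ h : B, |Θ h - Θ' h|) := by
  classical
  set ε := ⨆ h : B, |Θ h - Θ' h|
  have hε : ∀ h, |Θ h - Θ' h| ≤ ε := le_ciSup (Finite.bddAbove_range _)
  have hε₀ : 0 ≤ ε := Real.iSup_nonneg fun h => abs_nonneg _
  have hcover : ∀ᵐ ℓ ∂(gaussianPerturbation X A),
      sel ℓ ≠ sel' ℓ → ℓ ∈ ⋃ p, switchStrip pol Θ Θ' p := by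
    filter_upwards [hsel, hsel'] with ℓ hℓ hℓ' hne
    obtain ⟨x, hx⟩ := hsep _ _ hne
    exact Set.mem_iUnion.2 ⟨_, mem_switchStrip pol hℓ hℓ' hx⟩
  have hconst : 2 * (2 * ε / √(2 * Real.pi)) = √(8 / Real.pi) * ε := by
    rw [show (8 : ℝ) / Real.pi = 4 ^ 2 / (2 * Real.pi) by field_simp; norm_num,
      Real.sqrt_div' _ (by positivity), Real.sqrt_sq (by norm_num)]
    ring
  calc _ ≤ 2 * (gaussianPerturbation X A).real (⋃ p, switchStrip pol Θ Θ' p) :=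
        sum_abs_integral_ite_sub_le_two_mul_measureReal hmeas hmeas'
          (.iUnion fun p => measurableSet_switchStrip pol Θ Θ' p) hcover
    _ ≤ 2 * ∑ p : X × A, 2 * ε / √(2 * Real.pi) := by
        gcongr
        exact (measureReal_iUnion_fintype_le _).trans
          (sum_le_sum fun p _ => measureReal_switchStrip_le pol hε₀ hε p)
    _ = _ := by
        rw [sum_const, card_univ, Fintype.card_prod, nsmul_eq_mul, mul_left_comm, hconst]
        push_cast
        ring

/-- `Φ_𝒩` is `√(8/π)·A·X`-strongly smooth w.r.t. `‖·‖_∞`: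
for all `Θ, Θ′` (with measurable selections `sel, sel'` of the a.s. unique
maximizers of `h ↦ Θ[h]+q(ℓ)[h]` and `h ↦ Θ′[h]+q(ℓ)[h]`),
`‖E[H(Θ,ℓ)] − E[H(Θ′,ℓ)]‖₁ ≤ √(8/π)·A·X·‖Θ − Θ′‖_∞`. -/
theorem PhiN_gradient_strongly_smooth {X A B : Type*}
    [Fintype X] [Fintype A] [Fintype B]
    [Nonempty X] [Nonempty A] [Nonempty B] [DecidableEq B]
    (pol : B → X → A)
    (hsep : ∀ h h' : B, h ≠ h' → ∃ x : X, pol h x ≠ pol h' x)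
    (Θ Θ' : B → ℝ)
    (sel sel' : ((X × A) → ℝ) → B)
    (hmeas : ∀ h : B,
      Measurable fun ℓ : (X × A) → ℝ => (if sel ℓ = h then (1:ℝ) else 0))
    (hmeas' : ∀ h : B,
      Measurable fun ℓ : (X × A) → ℝ => (if sel' ℓ = h then (1:ℝ) else 0))
    (hsel : ∀ᵐ ℓ : (X × A) → ℝ ∂(gaussianPerturbation X A), ∀ h' : B,
      Θ h' + ∑ x : X, ℓ (x, pol h' x)
        ≤ Θ (sel ℓ) + ∑ x : X, ℓ (x, pol (sel ℓ) x))
    (hsel' : ∀ᵐ ℓ : (X × A) → ℝ ∂(gaussianPerturbation X A), ∀ h' : B,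
      Θ' h' + ∑ x : X, ℓ (x, pol h' x)
        ≤ Θ' (sel' ℓ) + ∑ x : X, ℓ (x, pol (sel' ℓ) x)) :
    ∑ h : B,
      |(∫ ℓ : (X × A) → ℝ, (if sel ℓ = h then (1:ℝ) else 0)
          ∂(gaussianPerturbation X A))
        - (∫ ℓ : (X × A) → ℝ, (if sel' ℓ = h then (1:ℝ) else 0)
            ∂(gaussianPerturbation X A))|
      ≤ Real.sqrt (8 / Real.pi) * (Fintype.card A) * (Fintype.card X) *
          (⨆ h : B, |Θ h - Θ' h|) :=
  PhiN_gradient_strongly_smooth_general pol hsep Θ Θ' sel sel' hmeas hmeas' hsel hsel'
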